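/- arXiv:1001.1186 — 3 statements merged into one kernel-verified Lean document; each statement's English description precedes it below -/
import Mathlib

section
/- Let Ξ = {u_{ij}^x : (i,j) ∈ S_x(Ξ)} ⊂ F² be grouped on horizontal lines per the lower set S_x(Ξ), and let p ∈ F[x,y] be a polynomial of the form p = x^{i_0}y^{j_0} − Σ_{(i,j) ∈ F_{i_0}} a_{ij} x^i y^j where F_{i_0} = {(i,j) ∈ S_x(Ξ) : (i,j) ≺_lex (i_0,j_0)} and 0 ≤ i_0 < m_0, j_0 > n_{i_0}. If p vanishes on Ξ' = {u_{mn}^x : (m,n) ∈ F_{i_0}}, then p vanishes on all of Ξ. -/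
open MvPolynomial Finset

/-- A finite subset of ℕ² closed under componentwise decrease. -/
def IsLowerSet2 (A : Finset (ℕ × ℕ)) : Prop :=
  ∀ a ∈ A, ∀ b : ℕ × ℕ, b.1 ≤ a.1 → b.2 ≤ a.2 → b ∈ A

/-- `Ξ` is `A`-cartesian: `Ξ = {(x i, y j) : (i,j) ∈ A}` for a lower set `A`,
with distinct `x i`'s and distinct `y j`'s (on the relevant indices). -/
def IsCartesianWith {F : Type*} [Field F] [DecidableEq F] (A : Finset (ℕ × ℕ)) (Ξ : Finset (F × F)) : Prop :=
  IsLowerSet2 A ∧ ∃ x y : ℕ → F,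
    Set.InjOn x {i | ∃ j, (i, j) ∈ A} ∧ Set.InjOn y {j | ∃ i, (i, j) ∈ A} ∧
    Ξ = A.image fun ij => (x ij.1, y ij.2)

/-- `Ξ` is cartesian. -/
def IsCartesian {F : Type*} [Field F] [DecidableEq F] (Ξ : Finset (F × F)) : Prop :=
  ∃ A, IsCartesianWith A Ξ

/-- Multiset of numbers of points of `Ξ` on the horizontal lines meeting `Ξ`. -/
def rowCounts {F : Type*} [Field F] [DecidableEq F] (Ξ : Finset (F × F)) : Multiset ℕ :=
  (Ξ.image Prod.snd).val.map fun b => (Ξ.filter fun p => p.2 = b).card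

/-- Multiset of numbers of points of `Ξ` on the vertical lines meeting `Ξ`. -/
def colCounts {F : Type*} [Field F] [DecidableEq F] (Ξ : Finset (F × F)) : Multiset ℕ :=
  (Ξ.image Prod.fst).val.map fun a => (Ξ.filter fun p => p.1 = a).card

/-- Multiset of row lengths of a finite subset of ℕ². -/
def rowCountsA (A : Finset (ℕ × ℕ)) : Multiset ℕ :=
  (A.image Prod.snd).val.map fun j => (A.filter fun p => p.2 = j).card

/-- Multiset of column heights of a finite subset of ℕ². -/
def colCountsA (A : Finset (ℕ × ℕ)) : Multiset ℕ :=
  (A.image Prod.fst).val.map fun i => (A.filter fun p => p.1 = i).card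

/-- `A` is the lower set `S_x(Ξ)` obtained by covering `Ξ` by horizontal lines
ordered by (nonincreasing) numbers of points: a lower set whose rows have
exactly the same lengths as the horizontal sections of `Ξ`. -/
def IsSx {F : Type*} [Field F] [DecidableEq F] (Ξ : Finset (F × F)) (A : Finset (ℕ × ℕ)) : Prop :=
  IsLowerSet2 A ∧ rowCountsA A = rowCounts Ξ

/-- `A` is the lower set `S_y(Ξ)` obtained by covering `Ξ` by vertical lines. -/
def IsSy {F : Type*} [Field F] [DecidableEq F] (Ξ : Finset (F × F)) (A : Finset (ℕ × ℕ)) : Prop :=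
  IsLowerSet2 A ∧ colCountsA A = colCounts Ξ

/-- Evaluation of a bivariate polynomial at a point of `F²`. -/
noncomputable def evalAt {F : Type*} [Field F] (ξ : F × F) (p : MvPolynomial (Fin 2) F) : F :=
  MvPolynomial.eval ![ξ.1, ξ.2] p

/-- The span of the monomials `x^i y^j`, `(i,j) ∈ A`. -/
noncomputable def monSpan (F : Type*) [Field F] (A : Finset (ℕ × ℕ)) :
    Submodule F (MvPolynomial (Fin 2) F) :=
  Submodule.span F ((fun ij : ℕ × ℕ => (X 0 : MvPolynomial (Fin 2) F) ^ ij.1 * X 1 ^ ij.2) '' A)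

/-- The interpolation scheme `(Ξ, A)` is regular: every data on `Ξ` is matched by a
unique element of the span of the monomials indexed by `A`. -/
def IsRegularScheme {F : Type*} [Field F] (Ξ : Finset (F × F)) (A : Finset (ℕ × ℕ)) : Prop :=
  ∀ f : F × F → F, ∃! p : MvPolynomial (Fin 2) F,
    p ∈ monSpan F A ∧ ∀ ξ ∈ Ξ, evalAt ξ p = f ξ

/-- The ideal of polynomials vanishing on `Ξ`. -/
noncomputable def vanishingIdeal (F : Type*) [Field F] (Ξ : Finset (F × F)) :
    Ideal (MvPolynomial (Fin 2) F) :=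
  ⨅ ξ ∈ Ξ, RingHom.ker (MvPolynomial.eval ![(ξ : F × F).1, ξ.2])

/-- The `≺_lex`-leading exponent (x-exponent compared first), `⊥` for the zero polynomial. -/
noncomputable def lexDeg {F : Type*} [Field F] (p : MvPolynomial (Fin 2) F) :
    WithBot (ℕ ×ₗ ℕ) :=
  (p.support.image fun d => toLex (d 0, d 1)).max

/-!
For a point `u (m, n)` with `(m, n) ∉ F_{i₀}` one has `m > i₀`, so the whole segment
`(0, n), …, (i₀, n)` of row `n` lies in `F_{i₀}`. Restricted to the horizontal line of row `n`,
`p` is a univariate polynomial of degree at most `i₀` vanishing at the `i₀ + 1` distinct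
abscissae of that segment, hence it vanishes identically on the line, in particular at
`u (m, n)`.
-/

section LineRestriction

variable {F : Type*} [Field F]

noncomputable def restrictToLine (y : F) (p : MvPolynomial (Fin 2) F) : Polynomial F :=
  (finSuccEquiv F 1 p).map (eval ![y])

theorem eval_restrictToLine (y t : F) (p : MvPolynomial (Fin 2) F) :
    (restrictToLine y p).eval t = evalAt (t, y) p :=
  (eval_eq_eval_mv_eval' ![y] t p).symm

theorem natDegree_restrictToLine_le (y : F) (p : MvPolynomial (Fin 2) F) :
    (restrictToLine y p).natDegree ≤ p.degreeOf 0 :=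
  (Polynomial.natDegree_map_le).trans (natDegree_finSuccEquiv p).le

theorem evalAt_eq_zero_of_degreeOf_lt_card {ι : Type*} [Fintype ι]
    {p : MvPolynomial (Fin 2) F} {y : F} {x : ι → F} (hx : Function.Injective x)
    (hdeg : p.degreeOf 0 < Fintype.card ι) (hzero : ∀ i, evalAt (x i, y) p = 0) (t : F) :
    evalAt (t, y) p = 0 := by
  have hres : restrictToLine y p = 0 :=
    Polynomial.eq_zero_of_natDegree_lt_card_of_eval_eq_zero _ hx
      (fun i => by rw [eval_restrictToLine, hzero])
      ((natDegree_restrictToLine_le y p).trans_lt hdeg)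
  rw [← eval_restrictToLine, hres, Polynomial.eval_zero]

end LineRestriction

theorem degreeOf_zero_C_mul_X_pow_mul_X_pow_le {R : Type*} [CommSemiring R] (c : R) (i j : ℕ) :
    (C c * X 0 ^ i * X 1 ^ j : MvPolynomial (Fin 2) R).degreeOf 0 ≤ i := by
  rw [degreeOf_mul_X_pow_of_ne _ (by decide), mul_comm]
  have hX : (X 0 ^ i : MvPolynomial (Fin 2) R).degreeOf 0 ≤ i :=
    degreeOf_le_iff.mpr fun m hm => by
      rw [X_pow_eq_monomial] at hm
      simp [Finset.mem_singleton.mp (support_monomial_subset hm)]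
  exact (degreeOf_mul_le _ _ _).trans (by simpa [degreeOf_C] using hX)

theorem degreeOf_zero_X_pow_mul_X_pow_sub_sum_le {R : Type*} [CommRing R] {i₀ : ℕ} (j₀ : ℕ)
    {T : Finset (ℕ × ℕ)} (a : ℕ × ℕ → R) (hT : ∀ q ∈ T, q.1 ≤ i₀) :
    (X 0 ^ i₀ * X 1 ^ j₀ - ∑ q ∈ T, C (a q) * X 0 ^ q.1 * X 1 ^ q.2 :
      MvPolynomial (Fin 2) R).degreeOf 0 ≤ i₀ := by
  refine (degreeOf_sub_le _ _ _).trans (max_le ?_ ?_)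
  · simpa using degreeOf_zero_C_mul_X_pow_mul_X_pow_le (1 : R) i₀ j₀
  · exact (degreeOf_sum_le _ _ _).trans <| Finset.sup_le fun q hq =>
      (degreeOf_zero_C_mul_X_pow_mul_X_pow_le _ _ _).trans (hT q hq)

theorem vanish_on_subset_implies_vanish_general {F : Type*} [Field F]
    (S : Finset (ℕ × ℕ)) (hS : IsLowerSet2 S)
    (u : ℕ × ℕ → F × F)
    (hy : ∀ m n, (m, n) ∈ S → (u (m, n)).2 = (u (0, n)).2)
    (hxd : ∀ m m' n, (m, n) ∈ S → (m', n) ∈ S → (u (m, n)).1 = (u (m', n)).1 → m = m')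
    (i₀ j₀ : ℕ)
    (hj₀ : ∀ j, (i₀, j) ∈ S → j < j₀)
    (a : ℕ × ℕ → F)
    (p : MvPolynomial (Fin 2) F)
    (hp : p = X 0 ^ i₀ * X 1 ^ j₀ -
      ∑ q ∈ S.filter (fun q => toLex q < toLex (i₀, j₀)),
        C (a q) * X 0 ^ q.1 * X 1 ^ q.2)
    (hvan : ∀ q ∈ S.filter (fun q => toLex q < toLex (i₀, j₀)), evalAt (u q) p = 0) :
    ∀ q ∈ S, evalAt (u q) p = 0 := by
  rintro ⟨m, n⟩ hq
  have hcol_lt : ∀ {i : ℕ}, i ≤ i₀ → (i, n) ∈ S → toLex (i, n) < toLex (i₀, j₀) :=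
    fun {i} hi hin => Prod.Lex.toLex_lt_toLex'.mpr ⟨hi, fun h : i = i₀ => hj₀ n (h ▸ hin)⟩
  by_cases hm : m ≤ i₀
  · exact hvan _ (mem_filter.mpr ⟨hq, hcol_lt hm hq⟩)
  have hcol : ∀ i : Fin (i₀ + 1), ((i : ℕ), n) ∈ S := fun i =>
    hS _ hq _ (by dsimp only; omega) le_rfl
  have hline : ∀ i, (i, n) ∈ S → u (i, n) = ((u (i, n)).1, (u (0, n)).2) := fun i hi =>
    Prod.ext rfl (hy i n hi)
  rw [hline m hq]
  refine evalAt_eq_zero_of_degreeOf_lt_card (x := fun i : Fin (i₀ + 1) => (u (i, n)).1)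
    (fun i i' h => Fin.ext (hxd _ _ n (hcol i) (hcol i') h)) ?_ (fun i => ?_) _
  · rw [Fintype.card_fin, hp, Nat.lt_succ_iff]
    exact degreeOf_zero_X_pow_mul_X_pow_sub_sum_le j₀ a fun q hq =>
      (Prod.Lex.toLex_lt_toLex'.mp (mem_filter.mp hq).2).1
  · rw [← hline i (hcol i)]
    exact hvan _ (mem_filter.mpr ⟨hcol i, hcol_lt (Nat.lt_succ_iff.mp i.2) (hcol i)⟩)

/-- In the setting of points grouped on horizontal lines per the
lower set `S = S_x(Ξ)`, let `p = x^{i₀}y^{j₀} − Σ_{(i,j) ∈ F_{i₀}} a_{ij} x^i y^j`,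
where `F_{i₀} = {(i,j) ∈ S : (i,j) ≺_lex (i₀,j₀)}`, `i₀` is smaller than the maximal
first index `m₀` and `j₀` exceeds the height `n_{i₀}` of column `i₀`. If `p`
vanishes at all points indexed by `F_{i₀}`, then `p` vanishes on all of `Ξ`. -/
theorem vanish_on_subset_implies_vanish {F : Type*} [Field F]
    (S : Finset (ℕ × ℕ)) (hS : IsLowerSet2 S)
    (u : ℕ × ℕ → F × F)
    (hy : ∀ m n, (m, n) ∈ S → (u (m, n)).2 = (u (0, n)).2)
    (hyd : ∀ n n', (0, n) ∈ S → (0, n') ∈ S → (u (0, n)).2 = (u (0, n')).2 → n = n')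
    (hxd : ∀ m m' n, (m, n) ∈ S → (m', n) ∈ S → (u (m, n)).1 = (u (m', n)).1 → m = m')
    (i₀ j₀ : ℕ)
    (hi₀ : ∃ q ∈ S, i₀ < q.1)
    (hj₀ : ∀ j, (i₀, j) ∈ S → j < j₀)
    (a : ℕ × ℕ → F)
    (p : MvPolynomial (Fin 2) F)
    (hp : p = X 0 ^ i₀ * X 1 ^ j₀ -
      ∑ q ∈ S.filter (fun q => toLex q < toLex (i₀, j₀)),
        C (a q) * X 0 ^ q.1 * X 1 ^ q.2)
    (hvan : ∀ q ∈ S.filter (fun q => toLex q < toLex (i₀, j₀)), evalAt (u q) p = 0) :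
    ∀ q ∈ S, evalAt (u q) p = 0 :=
  vanish_on_subset_implies_vanish_general S hS u hy hxd i₀ j₀ hj₀ a p hp hvan
end

section
/- Let Ξ ⊂ F² be finite, S_x(Ξ) its lower set, and F_{i_0} = {(i,j) ∈ S_x(Ξ) : (i,j) ≺_lex (i_0,j_0)} for given (i_0,j_0) with 0 ≤ i_0 < m_0 and j_0 > n_{i_0}. Then the linear system Σ_{(i,j) ∈ F_{i_0}} a_{ij} x_{mn}^i y_{mn}^j = x_{mn}^{i_0} y_{mn}^{j_0}, indexed over the points u_{mn}^x with (m,n) ∈ F_{i_0}, has a unique solution; equivalently, the evaluation matrix of the monomials {x^i y^j : (i,j) ∈ F_{i_0}} at the points {u_{mn}^x : (m,n) ∈ F_{i_0}} is invertible. -/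
open MvPolynomial Finset

/-! The monomials `X^i Y^j`, `(i,j) ∈ T`, with `T` a lower set, are linearly independent as
functions on the points `(x (m,n), y n)`, `(m,n) ∈ T`, so the square system is uniquely solvable.
If `p` is supported on `T` and vanishes at these points, then `p(X, y 0)` has degree less than
the length of the bottom row of `T` and vanishes at that many distinct points, so `Y - y 0`
divides `p`. The quotient is supported on `T` shifted down one row and vanishes on the points of
the remaining rows, where `y n ≠ y 0`; it is zero by induction on the degree in `Y`. -/

theorem existsUnique_solution_of_trivial_kernel {ι F : Type*} [Field F]
    (T : Finset ι) (K : ι → ι → F) (b : ι → F)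
    (hK : ∀ a : ι → F, (∀ q ∈ T, ∑ r ∈ T, a r * K q r = 0) → ∀ r ∈ T, a r = 0) :
    ∃! a : ι → F, (∀ q ∉ T, a q = 0) ∧ ∀ q ∈ T, ∑ r ∈ T, a r * K q r = b q := by
  classical
  let M : Matrix T T F := Matrix.of fun q r => K q r
  let extend : (T → F) → ι → F := fun v i => if h : i ∈ T then v ⟨i, h⟩ else 0
  have hsum : ∀ v (q : T), ∑ r ∈ T, extend v r * K q r = M.mulVec v q := by
    intro v q
    rw [← Finset.sum_coe_sort]
    simp [extend, M, Matrix.mulVec, dotProduct, mul_comm]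
  have hinj : Function.Injective M.mulVec := by
    rw [← Matrix.coe_mulVecLin, ← LinearMap.ker_eq_bot, LinearMap.ker_eq_bot']
    intro v hv
    funext r
    have := hK (extend v) (fun q hq => by rw [hsum v ⟨q, hq⟩]; exact congrFun hv _) r r.2
    simpa [extend] using this
  obtain ⟨v, hv⟩ := Matrix.mulVec_surjective_iff_isUnit.2 (Matrix.mulVec_injective_iff_isUnit.1 hinj)
    fun q => b q
  refine ⟨extend v, ⟨fun q hq => dif_neg hq, fun q hq => by rw [hsum v ⟨q, hq⟩, hv]⟩, ?_⟩
  rintro a ⟨ha0, ha⟩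
  funext i
  by_cases hi : i ∈ T
  · refine sub_eq_zero.1 (hK (a - extend v) (fun q hq => ?_) i hi)
    simp only [Pi.sub_apply, sub_mul, Finset.sum_sub_distrib, ha q hq, hsum v ⟨q, hq⟩, hv, sub_self]
  · simp [extend, ha0 i hi, hi]

open scoped Polynomial.Bivariate

namespace Polynomial

lemma exists_coeff_ne_zero_of_coeff_eval_C_ne_zero {R : Type*} [CommSemiring R] {p : R[X][Y]}
    {y : R} {i : ℕ} (h : (p.eval (C y)).coeff i ≠ 0) : ∃ j, (p.coeff j).coeff i ≠ 0 := by
  rw [eval_eq_sum_range, finsetSum_coeff] at h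
  obtain ⟨j, -, hj⟩ := Finset.exists_ne_zero_of_sum_ne_zero h
  exact ⟨j, fun hz => hj (by rw [← C_pow, coeff_mul_C, hz, zero_mul])⟩

lemma exists_coeff_ne_zero_of_coeff_divByMonic_X_sub_C_ne_zero {R : Type*} [CommRing R]
    {p : R[X][Y]} {c : R} {i j : ℕ} (h : ((p /ₘ (X - C (C c))).coeff j).coeff i ≠ 0) :
    ∃ k, j < k ∧ (p.coeff k).coeff i ≠ 0 := by
  rw [coeff_divByMonic_X_sub_C, finsetSum_coeff] at h
  obtain ⟨k, hk, hne⟩ := Finset.exists_ne_zero_of_sum_ne_zero h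
  exact ⟨k, (Finset.mem_Icc.1 hk).1, fun hz => hne (by rw [← C_pow, coeff_C_mul, hz, mul_zero])⟩

variable {F : Type*} [Field F]

lemma eval_C_eq_zero_of_evalEval_eq_zero {T : Set (ℕ × ℕ)} (hT : IsLowerSet T) {p : F[X][Y]}
    (hp : ∀ i j, (p.coeff j).coeff i ≠ 0 → (i, j) ∈ T) {x : ℕ → F}
    (hx : ∀ m m', (m, 0) ∈ T → (m', 0) ∈ T → x m = x m' → m = m') {y : F}
    (hzero : ∀ m, (m, 0) ∈ T → evalEval (x m) y p = 0) : p.eval (C y) = 0 := by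
  by_contra hq
  obtain ⟨j, hj⟩ := exists_coeff_ne_zero_of_coeff_eval_C_ne_zero (leadingCoeff_ne_zero.2 hq)
  have hrow : ∀ m ≤ (p.eval (C y)).natDegree, (m, 0) ∈ T :=
    fun m hm => hT (show (m, 0) ≤ (_, j) from ⟨hm, Nat.zero_le j⟩) (hp _ _ hj)
  refine hq (eq_zero_of_natDegree_lt_card_of_eval_eq_zero _ (f := fun m : Fin (_ + 1) => x m)
    (fun m m' h => Fin.ext (hx _ _ (hrow _ m.is_le) (hrow _ m'.is_le) h))
    (fun m => hzero _ (hrow _ m.is_le)) (by simp))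

theorem eq_zero_of_evalEval_eq_zero {T : Set (ℕ × ℕ)} (hT : IsLowerSet T) (p : F[X][Y])
    (hp : ∀ i j, (p.coeff j).coeff i ≠ 0 → (i, j) ∈ T) {x : ℕ × ℕ → F} {y : ℕ → F}
    (hx : ∀ m m' n, (m, n) ∈ T → (m', n) ∈ T → x (m, n) = x (m', n) → m = m')
    (hy : ∀ n n', (0, n) ∈ T → (0, n') ∈ T → y n = y n' → n = n')
    (hzero : ∀ m n, (m, n) ∈ T → evalEval (x (m, n)) (y n) p = 0) : p = 0 := by
  induction p using degree_lt_wf.induction generalizing T x y with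
  | _ p ih =>
  by_contra hp0
  obtain ⟨j, hj⟩ : ∃ j, p.coeff j ≠ 0 := not_forall.1 fun h => hp0 (ext h)
  obtain ⟨i, hi⟩ : ∃ i, (p.coeff j).coeff i ≠ 0 := not_forall.1 fun h => hj (ext h)
  have h00 : (0, 0) ∈ T := hT (Prod.mk_le_mk.2 ⟨i.zero_le, j.zero_le⟩) (hp i j hi)
  have hroot : p.IsRoot (C (y 0)) := eval_C_eq_zero_of_evalEval_eq_zero hT hp
    (fun m m' => hx m m' 0) (fun m hm => hzero m 0 hm)
  set q := p /ₘ (X - C (C (y 0)))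
  have hpq : (X - C (C (y 0))) * q = p := mul_divByMonic_eq_iff_isRoot.2 hroot
  have hshift : Monotone fun r : ℕ × ℕ => (r.1, r.2 + 1) :=
    fun r s h => Prod.mk_le_mk.2 ⟨h.1, Nat.add_le_add_right h.2 1⟩
  have hq : q = 0 := by
    refine ih q (degree_divByMonic_lt _ _ hp0 (by rw [degree_X_sub_C]; exact zero_lt_one))
      (hT.preimage hshift) (fun i j h => ?_) (x := fun r => x (r.1, r.2 + 1))
      (fun m m' n => hx m m' (n + 1))
      (fun n n' hn hn' h => Nat.succ_injective (hy _ _ hn hn' h)) (fun m n hmn => ?_)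
    · obtain ⟨k, hjk, hk⟩ := exists_coeff_ne_zero_of_coeff_divByMonic_X_sub_C_ne_zero h
      exact hT (Prod.mk_le_mk.2 ⟨le_rfl, hjk⟩) (hp i k hk)
    · have hy0 : y (n + 1) - y 0 ≠ 0 := fun h =>
        n.succ_ne_zero (hy _ _ (hT (Prod.mk_le_mk.2 ⟨m.zero_le, le_rfl⟩) hmn) h00 (sub_eq_zero.1 h))
      have := hzero m (n + 1) hmn
      rw [← hpq, evalEval_mul] at this
      simpa [hy0] using this
  exact hp0 (by rw [← hpq, hq, mul_zero])

theorem eq_zero_of_sum_mul_pow_eq_zero (T : Finset (ℕ × ℕ))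
    (hT : IsLowerSet (T : Set (ℕ × ℕ))) {x : ℕ × ℕ → F} {y : ℕ → F}
    (hx : ∀ m m' n, (m, n) ∈ T → (m', n) ∈ T → x (m, n) = x (m', n) → m = m')
    (hy : ∀ n n', (0, n) ∈ T → (0, n') ∈ T → y n = y n' → n = n') (a : ℕ × ℕ → F)
    (ha : ∀ q ∈ T, ∑ r ∈ T, a r * x q ^ r.1 * y q.2 ^ r.2 = 0) : ∀ r ∈ T, a r = 0 := by
  classical
  set p : F[X][Y] := ∑ r ∈ T, monomial r.2 (monomial r.1 (a r))
  have hcoeff : ∀ i j, (p.coeff j).coeff i = if (i, j) ∈ T then a (i, j) else 0 := by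
    intro i j
    rw [← Finset.sum_ite_eq' T (i, j) a, finsetSum_coeff, finsetSum_coeff]
    refine Finset.sum_congr rfl fun r _ => ?_
    simp only [coeff_monomial, Prod.ext_iff]
    split_ifs <;> simp_all [coeff_monomial]
  have hp : p = 0 := by
    refine eq_zero_of_evalEval_eq_zero hT p (fun i j h => ?_) hx hy (fun m n hmn => ?_)
    · by_contra hij
      exact h (by rw [hcoeff, if_neg (Finset.mem_coe.not.1 hij)])
    · simpa [p, evalEval, eval_finsetSum, mul_assoc] using ha _ hmn
  intro r hr
  simpa [hr, hp] using (hcoeff r.1 r.2).symm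

end Polynomial

theorem unique_solution_linear_system_general {F : Type*} [Field F]
    (S : Finset (ℕ × ℕ)) (hS : IsLowerSet2 S)
    (u : ℕ × ℕ → F × F)
    (hy : ∀ m n, (m, n) ∈ S → (u (m, n)).2 = (u (0, n)).2)
    (hyd : ∀ n n', (0, n) ∈ S → (0, n') ∈ S → (u (0, n)).2 = (u (0, n')).2 → n = n')
    (hxd : ∀ m m' n, (m, n) ∈ S → (m', n) ∈ S → (u (m, n)).1 = (u (m', n)).1 → m = m')
    (i₀ j₀ : ℕ) :
    ∃! a : ℕ × ℕ → F,
      (∀ q ∉ S.filter (fun q => toLex q < toLex (i₀, j₀)), a q = 0) ∧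
      ∀ q ∈ S.filter (fun q => toLex q < toLex (i₀, j₀)),
        (∑ r ∈ S.filter (fun r => toLex r < toLex (i₀, j₀)),
            a r * (u q).1 ^ r.1 * (u q).2 ^ r.2) =
          (u q).1 ^ i₀ * (u q).2 ^ j₀ := by
  set T := S.filter fun q => toLex q < toLex (i₀, j₀)
  have hTS : T ⊆ S := Finset.filter_subset _ _
  have hT : IsLowerSet (T : Set (ℕ × ℕ)) := by
    rw [Finset.coe_filter]
    exact IsLowerSet.inter (fun q r hrq hq => hS q hq r hrq.1 hrq.2)
      (isLowerSet_Iio (toLex (i₀, j₀)) |>.preimage Prod.Lex.toLex_mono)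
  simp only [mul_assoc]
  refine existsUnique_solution_of_trivial_kernel T _ _ fun a ha => ?_
  refine Polynomial.eq_zero_of_sum_mul_pow_eq_zero T hT (x := fun q => (u q).1)
    (fun m m' n hm hm' => hxd m m' n (hTS hm) (hTS hm'))
    (fun n n' hn hn' => hyd n n' (hTS hn) (hTS hn')) a fun q hq => ?_
  simpa only [← hy q.1 q.2 (hTS hq), mul_assoc] using ha q hq

/-- In the setting of points grouped on horizontal lines per the
lower set `S = S_x(Ξ)`, with `F_{i₀} = {(i,j) ∈ S : (i,j) ≺_lex (i₀,j₀)}`, `i₀ < m₀`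
and `j₀ > n_{i₀}`, the linear system
`Σ_{(i,j) ∈ F_{i₀}} a_{ij} x_{mn}^i y_{mn}^j = x_{mn}^{i₀} y_{mn}^{j₀}`,
`(m,n) ∈ F_{i₀}`, has a unique solution: the evaluation matrix of the monomials
indexed by `F_{i₀}` at the points indexed by `F_{i₀}` is invertible. -/
theorem unique_solution_linear_system {F : Type*} [Field F]
    (S : Finset (ℕ × ℕ)) (hS : IsLowerSet2 S)
    (u : ℕ × ℕ → F × F)
    (hy : ∀ m n, (m, n) ∈ S → (u (m, n)).2 = (u (0, n)).2)
    (hyd : ∀ n n', (0, n) ∈ S → (0, n') ∈ S → (u (0, n)).2 = (u (0, n')).2 → n = n')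
    (hxd : ∀ m m' n, (m, n) ∈ S → (m', n) ∈ S → (u (m, n)).1 = (u (m', n)).1 → m = m')
    (i₀ j₀ : ℕ)
    (hi₀ : ∃ q ∈ S, i₀ < q.1)
    (hj₀ : ∀ j, (i₀, j) ∈ S → j < j₀) :
    ∃! a : ℕ × ℕ → F,
      (∀ q ∉ S.filter (fun q => toLex q < toLex (i₀, j₀)), a q = 0) ∧
      ∀ q ∈ S.filter (fun q => toLex q < toLex (i₀, j₀)),
        (∑ r ∈ S.filter (fun r => toLex r < toLex (i₀, j₀)),
            a r * (u q).1 ^ r.1 * (u q).2 ^ r.2) =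
          (u q).1 ^ i₀ * (u q).2 ^ j₀ :=
  unique_solution_linear_system_general S hS u hy hyd hxd i₀ j₀
end

section
/- Let Ξ' ⊆ Ξ ⊂ F² with Ξ' an A'-cartesian subset, and let ≺ be any term order. Then the monomials {x^i y^j : (i,j) ∈ A'} all lie in the Gröbner éscalier of I(Ξ) with respect to ≺, so no element of the reduced Gröbner basis of I(Ξ) w.r.t. ≺ has leading monomial dividing (or equal to) any x^i y^j with (i,j) ∈ A'. -/
open MvPolynomial Finset

/-- `le` is a term order on bivariate exponents: a linear order compatible with
addition in which `(0,0)` is minimal. -/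
def IsTermOrder2 (le : ℕ × ℕ → ℕ × ℕ → Prop) : Prop :=
  (∀ a b, le a b ∨ le b a) ∧ (∀ a b, le a b → le b a → a = b) ∧
    (∀ a b c, le a b → le b c → le a c) ∧ (∀ a, le (0, 0) a) ∧
    (∀ a b c : ℕ × ℕ, le a b → le (a.1 + c.1, a.2 + c.2) (b.1 + c.1, b.2 + c.2))

/-- The exponent set `N_≺(Ξ)` of the Gröbner éscalier of the vanishing ideal of `Ξ`
w.r.t. the term order `le`: exponents `α` such that `x^α` is divisible by no
`le`-leading monomial of a nonzero element of `I(Ξ)`. -/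
noncomputable def escalier (F : Type*) [Field F] (Ξ : Finset (F × F))
    (le : ℕ × ℕ → ℕ × ℕ → Prop) : Set (ℕ × ℕ) :=
  {α | ¬ ∃ g ∈ vanishingIdeal F Ξ, g ≠ 0 ∧ ∃ d ∈ g.support,
    (∀ e ∈ g.support, le ((e 0 : ℕ), (e 1 : ℕ)) ((d 0 : ℕ), (d 1 : ℕ))) ∧
    d 0 ≤ α.1 ∧ d 1 ≤ α.2}


lemma coeff_lagrange_basis {F : Type*} [Field F] {ι : Type*} [DecidableEq ι]
    (s : Finset ι) (v : ι → F) (i : ι) :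
    (Lagrange.basis s v i).coeff #(s.erase i) = ∏ j ∈ s.erase i, (v i - v j)⁻¹ := by
  have h1 : Lagrange.basis s v i =
      Polynomial.C (∏ j ∈ s.erase i, (v i - v j)⁻¹) *
        ∏ j ∈ s.erase i, (Polynomial.X - Polynomial.C (v j)) := by
    rw [Lagrange.basis, map_prod, ← prod_mul_distrib]
    rfl
  have hm : (∏ j ∈ s.erase i, (Polynomial.X - Polynomial.C (v j))).Monic :=
    Polynomial.monic_prod_of_monic _ _ fun j _ => Polynomial.monic_X_sub_C _
  have hdeg : (∏ j ∈ s.erase i, (Polynomial.X - Polynomial.C (v j))).natDegree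
      = #(s.erase i) := by
    rw [Polynomial.natDegree_prod _ _ fun j _ => Polynomial.X_sub_C_ne_zero (v j)]
    simp
  rw [h1, Polynomial.coeff_C_mul, ← hdeg, hm.coeff_natDegree, mul_one]

lemma lag_sum {F : Type*} [Field F] (a k : ℕ) (hk : k ≤ a) (z : ℕ → F)
    (hz : Set.InjOn z ↑(Finset.range (a + 1))) :
    ∑ i ∈ Finset.range (a + 1),
      (∏ j ∈ (Finset.range (a + 1)).erase i, (z i - z j))⁻¹ * z i ^ k
      = if k = a then 1 else 0 := by
  have hdeg : (Polynomial.X ^ k : Polynomial F).degree < #(range (a + 1)) := by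
    rw [Polynomial.degree_X_pow, card_range]
    exact_mod_cast Nat.lt_succ_of_le hk
  have h := Lagrange.eq_interpolate hz hdeg
  have h2 := congrArg (fun p => Polynomial.coeff p a) h
  simp only [Lagrange.interpolate_apply, Polynomial.finset_sum_coeff,
    Polynomial.coeff_C_mul, Polynomial.coeff_X_pow] at h2
  rw [eq_comm]
  rw [show (if k = a then (1:F) else 0) = (if a = k then 1 else 0) by
    by_cases h : k = a <;> simp [h, Ne.symm, eq_comm]]
  rw [h2]
  refine Finset.sum_congr rfl fun i hi => ?_
  have hc : #((range (a + 1)).erase i) = a := by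
    rw [card_erase_of_mem hi, card_range]; omega
  have hb := coeff_lagrange_basis (range (a + 1)) z i
  rw [hc] at hb
  rw [hb, Polynomial.eval_pow, Polynomial.eval_X, ← prod_inv_distrib, mul_comm]

set_option maxHeartbeats 2000000 in
/-- If `Ξ'` is an `A'`-cartesian subset of `Ξ` and `≺` any term
order, then every monomial `x^i y^j` with `(i,j) ∈ A'` lies in the Gröbner éscalier
of `I(Ξ)`: no nonzero element of `I(Ξ)` (in particular no element of the reduced
Gröbner basis) has `≺`-leading monomial dividing `x^i y^j`. -/
theorem cartesian_subset_monomials_in_escalier {F : Type*} [Field F] [DecidableEq F]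
    (Ξ Ξ' : Finset (F × F)) (A' : Finset (ℕ × ℕ))
    (le : ℕ × ℕ → ℕ × ℕ → Prop) (hle : IsTermOrder2 le)
    (hsub : Ξ' ⊆ Ξ) (hcart : IsCartesianWith A' Ξ') :
    ∀ α ∈ A', α ∈ escalier F Ξ le := by
  intro α hα
  obtain ⟨hlow, x, y, hx, hy, hΞ'⟩ := hcart
  intro hcon
  obtain ⟨g, hg, hg0, d, hd, hdmax, hd0, hd1⟩ := hcon
  obtain ⟨a, b, hab0⟩ : ∃ a b : ℕ, (d 0, d 1) = (a, b) := ⟨d 0, d 1, rfl⟩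
  obtain ⟨hda, hdb⟩ := Prod.mk.inj hab0
  rw [hda] at hd0
  rw [hdb] at hd1
  have hdmax' : ∀ e ∈ g.support, le (e 0, e 1) (a, b) := by
    intro e he; rw [← hda, ← hdb]; exact hdmax e he
  have hab : (a, b) ∈ A' := hlow α hα (a, b) hd0 hd1
  have hmem : ∀ i ≤ a, ∀ j ≤ b, ((i, j) : ℕ × ℕ) ∈ A' := fun i hi j hj =>
    hlow (a, b) hab (i, j) hi hj
  have hgz : ∀ ξ ∈ Ξ, MvPolynomial.eval ![ξ.1, ξ.2] g = 0 := by
    intro ξ hξ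
    have hle' : vanishingIdeal F Ξ ≤ RingHom.ker (MvPolynomial.eval ![ξ.1, ξ.2]) :=
      iInf₂_le ξ hξ
    exact RingHom.mem_ker.mp (hle' hg)
  have heval0 : ∀ i ≤ a, ∀ j ≤ b, MvPolynomial.eval ![x i, y j] g = 0 := by
    intro i hi j hj
    refine hgz (x i, y j) (hsub ?_)
    rw [hΞ']
    exact Finset.mem_image.mpr ⟨(i, j), hmem i hi j hj, rfl⟩
  have hxI : Set.InjOn x ↑(Finset.range (a + 1)) := by
    intro i hi i' hi' hee
    exact hx ⟨0, hmem i (Nat.lt_succ_iff.mp (Finset.mem_range.mp hi)) 0 (Nat.zero_le _)⟩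
      ⟨0, hmem i' (Nat.lt_succ_iff.mp (Finset.mem_range.mp hi')) 0 (Nat.zero_le _)⟩ hee
  have hyJ : Set.InjOn y ↑(Finset.range (b + 1)) := by
    intro j hj j' hj' hee
    exact hy ⟨0, hmem 0 (Nat.zero_le _) j (Nat.lt_succ_iff.mp (Finset.mem_range.mp hj))⟩
      ⟨0, hmem 0 (Nat.zero_le _) j' (Nat.lt_succ_iff.mp (Finset.mem_range.mp hj'))⟩ hee
  have heval : ∀ p q : F, MvPolynomial.eval ![p, q] g =
      ∑ e ∈ g.support, MvPolynomial.coeff e g * (p ^ e 0 * q ^ e 1) := by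
    intro p q
    rw [MvPolynomial.eval_eq']
    refine Finset.sum_congr rfl fun e _ => ?_
    rw [Fin.prod_univ_two]
    simp
  have hS0 : ∑ i ∈ Finset.range (a + 1), ∑ j ∈ Finset.range (b + 1),
      (∏ k ∈ (Finset.range (a + 1)).erase i, (x i - x k))⁻¹ *
        (∏ k ∈ (Finset.range (b + 1)).erase j, (y j - y k))⁻¹ *
        MvPolynomial.eval ![x i, y j] g = 0 := by
    refine Finset.sum_eq_zero fun i hi => Finset.sum_eq_zero fun j hj => ?_
    rw [heval0 i (Nat.lt_succ_iff.mp (Finset.mem_range.mp hi))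
      j (Nat.lt_succ_iff.mp (Finset.mem_range.mp hj)), mul_zero]
  have step1 : ∑ i ∈ Finset.range (a + 1), ∑ j ∈ Finset.range (b + 1),
      (∏ k ∈ (Finset.range (a + 1)).erase i, (x i - x k))⁻¹ *
        (∏ k ∈ (Finset.range (b + 1)).erase j, (y j - y k))⁻¹ *
        MvPolynomial.eval ![x i, y j] g =
      ∑ e ∈ g.support, MvPolynomial.coeff e g *
        ((∑ i ∈ Finset.range (a + 1),
            (∏ k ∈ (Finset.range (a + 1)).erase i, (x i - x k))⁻¹ * x i ^ e 0) *
         (∑ j ∈ Finset.range (b + 1),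
            (∏ k ∈ (Finset.range (b + 1)).erase j, (y j - y k))⁻¹ * y j ^ e 1)) := by
    calc ∑ i ∈ Finset.range (a + 1), ∑ j ∈ Finset.range (b + 1),
          (∏ k ∈ (Finset.range (a + 1)).erase i, (x i - x k))⁻¹ *
            (∏ k ∈ (Finset.range (b + 1)).erase j, (y j - y k))⁻¹ *
            MvPolynomial.eval ![x i, y j] g
        = ∑ i ∈ Finset.range (a + 1), ∑ j ∈ Finset.range (b + 1), ∑ e ∈ g.support,
            MvPolynomial.coeff e g *
              (((∏ k ∈ (Finset.range (a + 1)).erase i, (x i - x k))⁻¹ * x i ^ e 0) *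
               ((∏ k ∈ (Finset.range (b + 1)).erase j, (y j - y k))⁻¹ * y j ^ e 1)) := by
          refine Finset.sum_congr rfl fun i _ => Finset.sum_congr rfl fun j _ => ?_
          rw [heval, Finset.mul_sum]
          exact Finset.sum_congr rfl fun e _ => by ring
      _ = ∑ i ∈ Finset.range (a + 1), ∑ e ∈ g.support, ∑ j ∈ Finset.range (b + 1),
            MvPolynomial.coeff e g *
              (((∏ k ∈ (Finset.range (a + 1)).erase i, (x i - x k))⁻¹ * x i ^ e 0) *
               ((∏ k ∈ (Finset.range (b + 1)).erase j, (y j - y k))⁻¹ * y j ^ e 1)) :=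
          Finset.sum_congr rfl fun i _ => Finset.sum_comm
      _ = ∑ e ∈ g.support, ∑ i ∈ Finset.range (a + 1), ∑ j ∈ Finset.range (b + 1),
            MvPolynomial.coeff e g *
              (((∏ k ∈ (Finset.range (a + 1)).erase i, (x i - x k))⁻¹ * x i ^ e 0) *
               ((∏ k ∈ (Finset.range (b + 1)).erase j, (y j - y k))⁻¹ * y j ^ e 1)) :=
          Finset.sum_comm
      _ = ∑ e ∈ g.support, MvPolynomial.coeff e g *
            ((∑ i ∈ Finset.range (a + 1),
                (∏ k ∈ (Finset.range (a + 1)).erase i, (x i - x k))⁻¹ * x i ^ e 0) *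
             (∑ j ∈ Finset.range (b + 1),
                (∏ k ∈ (Finset.range (b + 1)).erase j, (y j - y k))⁻¹ * y j ^ e 1)) := by
          refine Finset.sum_congr rfl fun e _ => ?_
          rw [Finset.sum_mul_sum, Finset.mul_sum]
          exact Finset.sum_congr rfl fun i _ => by rw [Finset.mul_sum]
  have hed : ∀ e ∈ g.support, e ≠ d → (e 0 < a ∨ e 1 < b) := by
    intro e he hne
    by_contra hcc
    push_neg at hcc
    obtain ⟨h1, h2⟩ := hcc
    have h3 := hle.2.2.2.2 (0, 0) (e 0 - a, e 1 - b) (a, b) (hle.2.2.2.1 _)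
    simp only [zero_add] at h3
    rw [Nat.sub_add_cancel h1, Nat.sub_add_cancel h2] at h3
    have h5 := hle.2.1 _ _ h3 (hdmax' e he)
    have ea : e 0 = a := congrArg Prod.fst h5.symm
    have eb : e 1 = b := congrArg Prod.snd h5.symm
    have h0 : e 0 = d 0 := by rw [ea, hda]
    have h1' : e 1 = d 1 := by rw [eb, hdb]
    exact hne (Finsupp.ext (Fin.cases h0 (fun j => Fin.cases h1' (fun k => k.elim0) j)))
  rw [step1] at hS0
  rw [Finset.sum_eq_single d] at hS0
  · have hσ : (∑ i ∈ Finset.range (a + 1),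
        (∏ k ∈ (Finset.range (a + 1)).erase i, (x i - x k))⁻¹ * x i ^ d 0) = 1 := by
      rw [hda]
      have h := lag_sum a a le_rfl x hxI
      rwa [if_pos rfl] at h
    have hτ : (∑ j ∈ Finset.range (b + 1),
        (∏ k ∈ (Finset.range (b + 1)).erase j, (y j - y k))⁻¹ * y j ^ d 1) = 1 := by
      rw [hdb]
      have h := lag_sum b b le_rfl y hyJ
      rwa [if_pos rfl] at h
    rw [hσ, hτ, mul_one, mul_one] at hS0
    exact MvPolynomial.mem_support_iff.mp hd hS0
  · intro e he hne
    rcases hed e he hne with h | h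
    · have hz : (∑ i ∈ Finset.range (a + 1),
          (∏ k ∈ (Finset.range (a + 1)).erase i, (x i - x k))⁻¹ * x i ^ e 0) = 0 := by
        have hh := lag_sum a (e 0) (le_of_lt h) x hxI
        rwa [if_neg (Nat.ne_of_lt h)] at hh
      rw [hz, zero_mul, mul_zero]
    · have hz : (∑ j ∈ Finset.range (b + 1),
          (∏ k ∈ (Finset.range (b + 1)).erase j, (y j - y k))⁻¹ * y j ^ e 1) = 0 := by
        have hh := lag_sum b (e 1) (le_of_lt h) y hyJ
        rwa [if_neg (Nat.ne_of_lt h)] at hh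
      rw [hz, mul_zero, mul_zero]
  · intro hdn
    exact absurd hd hdn
end
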